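/- arXiv:2308.15221 — 2 statements merged into one kernel-verified Lean document; each statement's English description precedes it below -/
import Mathlib

section
/- Let n and k be integers with 1 ≤ k ≤ n−2, and let λ and μ be partitions in the (k+1)×(n−k) box satisfying |λ| ≤ |μ| − k(n−k) + (k+1). If there exists an index i with 1 ≤ i ≤ k+1 such that λ_i > μ_i, then either λ = (n−k, 0, …, 0) and μ = (n−k−1, n−k−1, …, n−k−1), or λ = (1, 1, …, 1) and μ = (n−k, …, n−k, 0). -/
/-! Let `a = λ_i > μ_i` (indices from `0`) and `m = n - k`. Monotonicity gives
`λ ≥ (a,…,a,0,…,0)` with `i + 1` entries `a`, and `μ ≤ (m,…,m,a-1,…,a-1)` with `i` entries `m`.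
Put into the codimension inequality, these bounds leave the slack `(k-i)(m-a) + i(a-1) ≥ 0`,
so both bounds are attained and the slack vanishes: either `i = 0, a = m` or `i = k, a = 1`. -/

/-- A partition in the `(k+1) × (n-k)` box: a weakly decreasing sequence
`λ_1 ≥ … ≥ λ_{k+1}` (indexed by `Fin (k+1)`) with all parts at most `n - k`. -/
def IsBoxPartition (n k : ℕ) (lam : Fin (k + 1) → ℕ) : Prop :=
  (∀ i, lam i ≤ n - k) ∧ Antitone lam

open Finset

theorem Fin.sum_ite_val_lt (N t x y : ℕ) (ht : t ≤ N) :
    ∑ j : Fin N, (if (j : ℕ) < t then x else y) = t * x + (N - t) * y := by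
  have hcard := card_filter_add_card_filter_not (s := (univ : Finset (Fin N)))
    (fun j : Fin N => (j : ℕ) < t)
  rw [Fin.card_filter_val_lt, card_univ, Fintype.card_fin] at hcard
  rw [sum_ite, Finset.sum_const, Finset.sum_const, Fin.card_filter_val_lt, smul_eq_mul,
    smul_eq_mul, min_eq_right ht]
  grind

theorem Antitone.ite_le {N : ℕ} {f : Fin N → ℕ} (hf : Antitone f) (i : Fin N) :
    (fun j : Fin N => if (j : ℕ) < i + 1 then f i else 0) ≤ f := fun j => by
  dsimp only
  split_ifs with hj
  · exact hf (Fin.le_def.mpr (by omega))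
  · exact Nat.zero_le _

theorem Antitone.le_ite {N : ℕ} {f : Fin N → ℕ} (hf : Antitone f) {b c : ℕ}
    (hb : ∀ j, f j ≤ b) (i : Fin N) (hc : f i ≤ c) :
    f ≤ fun j : Fin N => if (j : ℕ) < i then b else c := fun j => by
  dsimp only
  split_ifs with hj
  · exact hb j
  · exact (hf (Fin.le_def.mpr (by omega))).trans hc

theorem eq_and_eq_of_sum_add_le {ι : Type*} [Fintype ι] {f g F G : ι → ℕ} {c d s : ℕ}
    (hF : F ≤ f) (hG : g ≤ G) (h : ∑ j, f j + c ≤ ∑ j, g j + d)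
    (hFG : ∑ j, G j + d + s = ∑ j, F j + c) : s = 0 ∧ f = F ∧ g = G := by
  have hFf : ∑ j, F j ≤ ∑ j, f j := sum_le_sum fun j _ => hF j
  have hgG : ∑ j, g j ≤ ∑ j, G j := sum_le_sum fun j _ => hG j
  refine ⟨by omega, funext fun j => ?_, funext fun j => ?_⟩
  · exact ((sum_eq_sum_iff_of_le fun j _ => hF j).mp (by omega) j (mem_univ j)).symm
  · exact (sum_eq_sum_iff_of_le fun j _ => hG j).mp (by omega) j (mem_univ j)

theorem box_slack_eq {i k a m : ℕ} (hi : i ≤ k) (ha : 1 ≤ a) (ham : a ≤ m) :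
    i * m + (k + 1 - i) * (a - 1) + (k + 1) + ((k - i) * (m - a) + i * (a - 1)) =
      (i + 1) * a + (k + 1 - (i + 1)) * 0 + k * m := by
  obtain ⟨e, rfl⟩ := Nat.exists_eq_add_of_le hi
  obtain ⟨b, rfl⟩ := Nat.exists_eq_add_of_le ha
  obtain ⟨d, rfl⟩ := Nat.exists_eq_add_of_le ham
  simp only [Nat.add_sub_cancel_left, show i + e + 1 - i = e + 1 by omega]
  ring

/-- If `|λ| ≤ |μ| - k(n-k) + (k+1)` and `λ_i > μ_i` for some `i`, then
`λ = (n-k,0,…,0), μ = (n-k-1,…,n-k-1)` or `λ = (1,…,1), μ = (n-k,…,n-k,0)`. -/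
theorem box_partition_exists_gt (n k : ℕ) (hk : 1 ≤ k) (hkn : k + 2 ≤ n)
    (lam mu : Fin (k + 1) → ℕ)
    (hlam : IsBoxPartition n k lam) (hmu : IsBoxPartition n k mu)
    (hcodim : (∑ i, lam i) + k * (n - k) ≤ (∑ i, mu i) + (k + 1))
    (hgt : ∃ i, mu i < lam i) :
    ((lam = fun i : Fin (k + 1) => if (i : ℕ) = 0 then n - k else 0) ∧
      (mu = fun _ => n - k - 1)) ∨
    ((lam = fun _ => 1) ∧
      (mu = fun i : Fin (k + 1) => if (i : ℕ) = k then 0 else n - k)) := by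
  obtain ⟨i, hi⟩ := hgt
  have hik : (i : ℕ) ≤ k := Nat.lt_succ_iff.mp i.isLt
  obtain ⟨hslack, hlamL, hmuU⟩ := eq_and_eq_of_sum_add_le
    (s := (k - i) * (n - k - lam i) + i * (lam i - 1)) (hlam.2.ite_le i)
    (hmu.2.le_ite hmu.1 i (Nat.le_sub_one_of_lt hi)) hcodim
    (by rw [Fin.sum_ite_val_lt _ (i + 1) _ _ (by omega), Fin.sum_ite_val_lt _ i _ _ (by omega)]
        exact box_slack_eq hik (by omega) (hlam.1 i))
  rw [hlamL, hmuU]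
  obtain ⟨hfirst, hsecond⟩ := Nat.add_eq_zero_iff.mp hslack
  rw [mul_eq_zero] at hfirst hsecond
  have hlami_le := hlam.1 i
  rcases Nat.eq_zero_or_pos (i : ℕ) with hi0 | hipos
  · have hlami : lam i = n - k := by omega
    left
    constructor <;> funext j <;> split_ifs <;> omega
  · have hlami : lam i = 1 := by omega
    have hi_eq : (i : ℕ) = k := by omega
    right
    constructor <;> funext j <;> split_ifs <;> omega
end

section
/- Let n and k be integers with 1 ≤ k ≤ n−2, and let λ and μ be partitions in the (k+1)×(n−k) box satisfying |λ| ≤ |μ| − k(n−k) + (k+1). If there exists an integer h with 1 ≤ h ≤ k such that λ_{h+1} > μ_{h+1}, then λ = (1, 1, …, 1) and μ = (n−k, …, n−k, 0). -/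
open Finset

lemma sum_le_mul_add_mul_of_antitone {N m : ℕ} {f : Fin N → ℕ} (hf : Antitone f)
    (hm : ∀ i, f i ≤ m) (j : Fin N) : ∑ i, f i ≤ j * m + (N - j) * f j := by
  have hsplit : ∑ i, f i = ∑ i ∈ Iio j, f i + ∑ i ∈ Ici j, f i := by
    rw [← sum_filter_add_sum_filter_not univ (· < j)]
    congr 2 <;> ext <;> simp
  calc ∑ i, f i = ∑ i ∈ Iio j, f i + ∑ i ∈ Ici j, f i := hsplit
    _ ≤ #(Iio j) • m + #(Ici j) • f j :=
      add_le_add (sum_le_card_nsmul _ _ _ fun i _ => hm i)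
        (sum_le_card_nsmul _ _ _ fun i hi => hf (mem_Ici.1 hi))
    _ = j * m + (N - j) * f j := by simp [Fin.card_Iio, Fin.card_Ici]

lemma succ_mul_le_sum_of_antitone {N : ℕ} {f : Fin N → ℕ} (hf : Antitone f) (j : Fin N) :
    (j + 1) * f j ≤ ∑ i, f i :=
  calc (j + 1) * f j = #(Iic j) • f j := by simp [Fin.card_Iic]
    _ ≤ ∑ i ∈ Iic j, f i := card_nsmul_le_sum _ _ _ fun i hi => hf (mem_Iic.1 hi)
    _ ≤ ∑ i, f i := sum_le_sum_of_subset (subset_univ _)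

lemma eq_and_eq_zero_of_mul_add_le {k m h b : ℕ} (hh : 1 ≤ h) (hhk : h ≤ k) (hm : 2 ≤ m)
    (hb : b < m) (hle : (h + 1) * (b + 1) + k * m ≤ h * m + (k + 1 - h) * b + (k + 1)) :
    h = k ∧ b = 0 := by
  obtain ⟨d, rfl⟩ := Nat.exists_eq_add_of_le hhk
  obtain ⟨c, rfl⟩ := Nat.exists_eq_add_of_lt hb
  -- with `k = h + d` and `m = b + c + 1` the inequality collapses to `h b + d c ≤ 0`
  have hzero : h * b + d * c = 0 := by
    rw [show h + d + 1 - h = d + 1 by omega] at hle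
    nlinarith
  have hb0 : b = 0 := by nlinarith
  subst hb0
  have hd0 : d = 0 := by nlinarith
  exact ⟨by omega, rfl⟩

lemma Fintype.eq_of_le_of_sum_le {ι M : Type*} [Fintype ι] [AddCommMonoid M] [PartialOrder M]
    [IsOrderedCancelAddMonoid M] {f g : ι → M} (hfg : f ≤ g) (hsum : ∑ i, g i ≤ ∑ i, f i) :
    f = g :=
  hfg.eq_of_not_lt fun hlt => (Fintype.sum_strictMono hlt).not_ge hsum

lemma sum_ite_eq_last_zero (k m : ℕ) :
    ∑ i : Fin (k + 1), (if (i : ℕ) = k then 0 else m) = k * m := by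
  simp [Fin.sum_univ_castSucc, Fin.val_castSucc, Nat.ne_of_lt]

/-- The case `h > 0` of Proposition 2.7: if `|λ| ≤ |μ| - k(n-k) + (k+1)` and
`λ_{h+1} > μ_{h+1}` for some `1 ≤ h ≤ k`, then `λ = (1,…,1)` and
`μ = (n-k,…,n-k,0)`. -/
theorem box_partition_later_part_gt (n k : ℕ) (hkn : k + 2 ≤ n)
    (lam mu : Fin (k + 1) → ℕ)
    (hlam : IsBoxPartition n k lam) (hmu : IsBoxPartition n k mu)
    (hcodim : (∑ i, lam i) + k * (n - k) ≤ (∑ i, mu i) + (k + 1))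
    (h : ℕ) (hh1 : 1 ≤ h) (hhk : h ≤ k)
    (hgt : mu ⟨h, by omega⟩ < lam ⟨h, by omega⟩) :
    (lam = fun _ => 1) ∧
      (mu = fun i : Fin (k + 1) => if (i : ℕ) = k then 0 else n - k) := by
  obtain ⟨hlam_le, hlam_anti⟩ := hlam
  obtain ⟨hmu_le, hmu_anti⟩ := hmu
  have hmu_sum := sum_le_mul_add_mul_of_antitone hmu_anti hmu_le ⟨h, by omega⟩
  have hlam_sum := (Nat.mul_le_mul_left (h + 1) (Nat.add_one_le_of_lt hgt)).trans
    (succ_mul_le_sum_of_antitone hlam_anti ⟨h, by omega⟩)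
  dsimp only at hmu_sum hlam_sum
  obtain ⟨rfl, hmu_last⟩ : k = h ∧ mu ⟨h, _⟩ = 0 :=
    (eq_and_eq_zero_of_mul_add_le hh1 hhk (by omega) (hgt.trans_le (hlam_le _))
      (by linarith)).imp_left Eq.symm
  rw [hmu_last, mul_zero, add_zero] at hmu_sum
  rw [hmu_last, zero_add, mul_one] at hlam_sum
  rw [hmu_last] at hgt
  refine ⟨(Fintype.eq_of_le_of_sum_le ?_ ?_).symm, Fintype.eq_of_le_of_sum_le ?_ ?_⟩
  · exact fun i => hgt.trans_le (hlam_anti (Fin.le_last i))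
  · simp only [sum_const, card_univ, Fintype.card_fin, smul_eq_mul, mul_one]
    linarith
  · intro i
    dsimp only
    split_ifs with hi
    · exact (congrArg mu (Fin.ext hi)).trans_le hmu_last.le
    · exact hmu_le i
  · rw [sum_ite_eq_last_zero]
    linarith
end
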